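/- Let m and n be nonnegative integers. The generating function, according to size, of partitions with exactly m distinct parts each of size at most n equals q^{m(m+1)/2} times the Gaussian binomial coefficient binom(n, m)_q; that is, Σ_p q^{|p|} = q^{m(m+1)/2} · [n choose m]_q, where the sum ranges over all partitions p with exactly m pairwise distinct parts, each at most n. -/

import Mathlib

open Polynomial Filter

/-- The hook length of the cell `(i, j)` of a Young diagram:
the arm plus the leg plus one. -/
def YoungDiagram.hookLength (Y : YoungDiagram) (i j : ℕ) : ℕ :=
  (Y.rowLen i - j) + (Y.colLen j - i) - 1

/-- A Young diagram is an `(s, t)`-core if none of its cells has hook length `s` or `t`. -/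
def YoungDiagram.IsCore (Y : YoungDiagram) (s t : ℕ) : Prop :=
  ∀ i j : ℕ, (i, j) ∈ Y → Y.hookLength i j ≠ s ∧ Y.hookLength i j ≠ t

/-- A Young diagram has distinct parts if its nonzero row lengths are pairwise distinct,
i.e. strictly decreasing. -/
def YoungDiagram.DistinctParts (Y : YoungDiagram) : Prop :=
  ∀ i : ℕ, 0 < Y.rowLen (i + 1) → Y.rowLen (i + 1) < Y.rowLen i

/-- The perimeter of a partition: its largest hook length, namely the hook length of the
top-left box for a nonempty partition, and `0` for the empty partition. -/
def YoungDiagram.perimeter (Y : YoungDiagram) : ℕ :=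
  Y.rowLen 0 + Y.colLen 0 - 1

/-- `corePartitionsDistinct s` is the set `P_s` of `(s, s+1)`-core partitions with
distinct parts. -/
def corePartitionsDistinct (s : ℕ) : Set YoungDiagram :=
  {Y | Y.DistinctParts ∧ Y.IsCore s (s + 1)}

/-- The Gaussian (`q`-)binomial coefficient `[n choose m]_q`: the generating function,
according to size, of partitions whose Young diagram fits inside an `m × (n - m)` rectangle
(i.e. with at most `m` parts, each at most `n - m`), interpreted as `0` when `m > n`. -/
noncomputable def qBinomial (n m : ℕ) : Polynomial ℤ :=
  if m ≤ n then
    ∑ᶠ Y ∈ {Y : YoungDiagram | Y.colLen 0 ≤ m ∧ Y.rowLen 0 ≤ n - m}, (Polynomial.X : Polynomial ℤ) ^ Y.card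
  else 0

/-- `G_s(q) = Σ_{p ∈ P_s} q^{|p|}`, the generating function according to size of the
`(s, s+1)`-core partitions with distinct parts. -/
noncomputable def Gpoly (s : ℕ) : Polynomial ℤ :=
  ∑ᶠ Y ∈ corePartitionsDistinct s, (Polynomial.X : Polynomial ℤ) ^ Y.card

namespace GenFunAux

open YoungDiagram

lemma nat_eq_of_lt_iff {a b : ℕ} (h : ∀ i, i < a ↔ i < b) : a = b := by
  have h1 := h a; have h2 := h b; omega

lemma eq_of_rowLen_eq {μ ν : YoungDiagram} (h : ∀ i, μ.rowLen i = ν.rowLen i) : μ = ν := by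
  ext c
  obtain ⟨i, j⟩ := c
  rw [YoungDiagram.mem_cells, YoungDiagram.mem_cells, mem_iff_lt_rowLen, mem_iff_lt_rowLen, h]

/-- Add a staircase of widths `m, m-1, ..., 1` to the first `m` rows. -/
def unshift (m : ℕ) (μ : YoungDiagram) : YoungDiagram where
  cells := (Finset.range m ×ˢ Finset.range (μ.rowLen 0 + m)).filter
    (fun c => c.2 < μ.rowLen c.1 + (m - c.1))
  isLowerSet := by
    rintro ⟨i2, j2⟩ ⟨i1, j1⟩ hle hc
    obtain ⟨hi, hj⟩ := Prod.mk_le_mk.mp hle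
    simp only [Finset.coe_filter, Set.mem_setOf_eq, Finset.mem_product, Finset.mem_range] at hc ⊢
    have h1 : μ.rowLen i2 ≤ μ.rowLen i1 := μ.rowLen_anti _ _ hi
    refine ⟨⟨by omega, by omega⟩, by omega⟩

lemma mem_unshift {m : ℕ} {μ : YoungDiagram} {i j : ℕ} :
    (i, j) ∈ unshift m μ ↔ i < m ∧ j < μ.rowLen i + (m - i) := by
  rw [← YoungDiagram.mem_cells]
  simp only [unshift, Finset.mem_filter, Finset.mem_product, Finset.mem_range]
  have h1 : μ.rowLen i ≤ μ.rowLen 0 := μ.rowLen_anti _ _ (Nat.zero_le _)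
  constructor
  · rintro ⟨⟨h2, h3⟩, h4⟩; exact ⟨h2, h4⟩
  · rintro ⟨h2, h3⟩; exact ⟨⟨h2, by omega⟩, h3⟩

lemma rowLen_unshift (m : ℕ) (μ : YoungDiagram) (i : ℕ) :
    (unshift m μ).rowLen i = if i < m then μ.rowLen i + (m - i) else 0 := by
  apply nat_eq_of_lt_iff
  intro j
  rw [← mem_iff_lt_rowLen, mem_unshift]
  split_ifs with h <;> omega

lemma colLen0_unshift (m : ℕ) (μ : YoungDiagram) : (unshift m μ).colLen 0 = m := by
  apply nat_eq_of_lt_iff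
  intro i
  rw [← mem_iff_lt_colLen, mem_unshift]
  omega

lemma card_eq_sum_rowLens (μ : YoungDiagram) (k : ℕ) (h : μ.colLen 0 ≤ k) :
    μ.card = ∑ i ∈ Finset.range k, μ.rowLen i := by
  show μ.cells.card = _
  rw [Finset.card_eq_sum_card_fiberwise
    (f := Prod.fst) (t := Finset.range k) ?_]
  · refine Finset.sum_congr rfl fun i _ => ?_
    rw [rowLen_eq_card]
    rfl
  · intro c hc
    simp only [Finset.mem_coe] at hc ⊢
    rw [YoungDiagram.mem_cells] at hc
    have h1 : c.1 < μ.colLen c.2 := mem_iff_lt_colLen.mp (by exact hc)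
    have h2 : μ.colLen c.2 ≤ μ.colLen 0 := μ.colLen_anti _ _ (Nat.zero_le _)
    exact Finset.mem_range.mpr (by omega)

lemma gap {Y : YoungDiagram} (hd : Y.DistinctParts) (i : ℕ) :
    ∀ k : ℕ, 0 < Y.rowLen (i + k) → Y.rowLen (i + k) + k ≤ Y.rowLen i := by
  intro k
  induction k with
  | zero => simp
  | succ k ih =>
    intro hk
    have h1 : Y.rowLen (i + k + 1) < Y.rowLen (i + k) := hd (i + k) hk
    have h2 : 0 < Y.rowLen (i + k) := by omega
    have h3 := ih h2
    have : i + (k + 1) = i + k + 1 := by omega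
    rw [this]
    omega

lemma finite_of_subset_box (s : Set YoungDiagram) (a b : ℕ)
    (h : ∀ Y ∈ s, Y.cells ⊆ Finset.range a ×ˢ Finset.range b) : s.Finite := by
  apply Set.Finite.of_finite_image (f := YoungDiagram.cells)
  · apply Set.Finite.subset (Finset.finite_toSet ((Finset.range a ×ˢ Finset.range b).powerset))
    rintro _ ⟨Y, hY, rfl⟩
    rw [Finset.mem_coe, Finset.mem_powerset]
    exact h Y hY
  · intro Y _ Z _ hYZ
    exact YoungDiagram.ext hYZ

/-- Subtract a staircase from a diagram with distinct parts. -/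
def shift (m : ℕ) (Y : YoungDiagram) (hd : Y.DistinctParts) : YoungDiagram where
  cells := (Finset.range m ×ˢ Finset.range (Y.rowLen 0)).filter
    (fun c => c.2 + (m - c.1) < Y.rowLen c.1)
  isLowerSet := by
    rintro ⟨i2, j2⟩ ⟨i1, j1⟩ hle hc
    obtain ⟨hi, hj⟩ := Prod.mk_le_mk.mp hle
    simp only [Finset.coe_filter, Set.mem_setOf_eq, Finset.mem_product, Finset.mem_range] at hc ⊢
    obtain ⟨⟨h2, h3⟩, h4⟩ := hc
    have hpos : 0 < Y.rowLen i2 := by omega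
    have hgap : Y.rowLen i2 + (i2 - i1) ≤ Y.rowLen i1 := by
      have := gap hd i1 (i2 - i1)
      have he : i1 + (i2 - i1) = i2 := by omega
      rw [he] at this
      exact this hpos
    have hmono : Y.rowLen i1 ≤ Y.rowLen 0 := Y.rowLen_anti _ _ (Nat.zero_le _)
    exact ⟨⟨by omega, by omega⟩, by omega⟩

lemma mem_shift {m : ℕ} {Y : YoungDiagram} {hd : Y.DistinctParts} {i j : ℕ} :
    (i, j) ∈ shift m Y hd ↔ i < m ∧ j + (m - i) < Y.rowLen i := by
  rw [← YoungDiagram.mem_cells]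
  simp only [shift, Finset.mem_filter, Finset.mem_product, Finset.mem_range]
  have hmono : Y.rowLen i ≤ Y.rowLen 0 := Y.rowLen_anti _ _ (Nat.zero_le _)
  constructor
  · rintro ⟨⟨h2, h3⟩, h4⟩; exact ⟨h2, h4⟩
  · rintro ⟨h2, h3⟩; exact ⟨⟨h2, by omega⟩, h3⟩

lemma rowLen_shift (m : ℕ) (Y : YoungDiagram) (hd : Y.DistinctParts) (i : ℕ) :
    (shift m Y hd).rowLen i = if i < m then Y.rowLen i - (m - i) else 0 := by
  apply nat_eq_of_lt_iff
  intro j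
  rw [← mem_iff_lt_rowLen, mem_shift]
  split_ifs with h <;> omega

lemma staircase_sum (m : ℕ) : ∑ i ∈ Finset.range m, (m - i) = m * (m + 1) / 2 := by
  have h1 : ∑ i ∈ Finset.range m, (m - i) + ∑ i ∈ Finset.range m, i
      = ∑ i ∈ Finset.range m, m := by
    rw [← Finset.sum_add_distrib]
    exact Finset.sum_congr rfl fun i hi => by
      have := Finset.mem_range.mp hi; omega
  rw [Finset.sum_const, Finset.card_range, smul_eq_mul] at h1
  have h2 := Finset.sum_range_id_mul_two m
  have e1 : m * (m + 1) = m * m + m := by ring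
  have e2 : m * (m - 1) + m = m * m := by
    cases m with
    | zero => simp
    | succ k => simp [Nat.succ_sub_one]; ring
  omega

lemma rowLen_pos_iff {Y : YoungDiagram} {i : ℕ} : 0 < Y.rowLen i ↔ i < Y.colLen 0 := by
  rw [← mem_iff_lt_rowLen, mem_iff_lt_colLen]

end GenFunAux

open GenFunAux YoungDiagram in
/-- The generating function, according to size, of partitions with exactly `m` distinct parts
each of size at most `n` equals `q^{m(m+1)/2}` times the Gaussian binomial coefficient
`[n choose m]_q`. -/
theorem genFun_distinctParts_eq (m n : ℕ) :
    ∑ᶠ Y ∈ {Y : YoungDiagram | Y.DistinctParts ∧ Y.colLen 0 = m ∧ Y.rowLen 0 ≤ n},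
      (Polynomial.X : Polynomial ℤ) ^ Y.card
      = Polynomial.X ^ (m * (m + 1) / 2) * qBinomial n m := by
  set A : Set YoungDiagram :=
    {Y | Y.DistinctParts ∧ Y.colLen 0 = m ∧ Y.rowLen 0 ≤ n} with hA
  set B : Set YoungDiagram :=
    {Y | Y.colLen 0 ≤ m ∧ Y.rowLen 0 ≤ n - m} with hB
  -- row lengths bound m - i ≤ rowLen i for Y ∈ A
  have hlow : ∀ Y ∈ A, ∀ i, i < m → m - i ≤ Y.rowLen i := by
    rintro Y ⟨hd, hc, hr⟩ i him
    have h0 : 0 < Y.rowLen (m - 1) := rowLen_pos_iff.mpr (by omega)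
    have h1 := gap hd i (m - 1 - i)
    have he : i + (m - 1 - i) = m - 1 := by omega
    rw [he] at h1
    have := h1 h0
    omega
  by_cases hmn : m ≤ n
  · -- main case
    have hAfin : A.Finite := by
      apply finite_of_subset_box A m n
      rintro Y ⟨hd, hc, hr⟩ c hcY
      rw [YoungDiagram.mem_cells] at hcY
      have h1 : c.1 < Y.colLen c.2 := mem_iff_lt_colLen.mp (by exact hcY)
      have h2 : Y.colLen c.2 ≤ Y.colLen 0 := Y.colLen_anti _ _ (Nat.zero_le _)
      have h3 : c.2 < Y.rowLen c.1 := mem_iff_lt_rowLen.mp (by exact hcY)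
      have h4 : Y.rowLen c.1 ≤ Y.rowLen 0 := Y.rowLen_anti _ _ (Nat.zero_le _)
      exact Finset.mem_product.mpr ⟨Finset.mem_range.mpr (by omega),
        Finset.mem_range.mpr (by omega)⟩
    have hBfin : B.Finite := by
      apply finite_of_subset_box B m (n - m)
      rintro Y ⟨hc, hr⟩ c hcY
      rw [YoungDiagram.mem_cells] at hcY
      have h1 : c.1 < Y.colLen c.2 := mem_iff_lt_colLen.mp (by exact hcY)
      have h2 : Y.colLen c.2 ≤ Y.colLen 0 := Y.colLen_anti _ _ (Nat.zero_le _)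
      have h3 : c.2 < Y.rowLen c.1 := mem_iff_lt_rowLen.mp (by exact hcY)
      have h4 : Y.rowLen c.1 ≤ Y.rowLen 0 := Y.rowLen_anti _ _ (Nat.zero_le _)
      exact Finset.mem_product.mpr ⟨Finset.mem_range.mpr (by omega),
        Finset.mem_range.mpr (by omega)⟩
    have hq : qBinomial n m = ∑ᶠ Y ∈ B, (Polynomial.X : Polynomial ℤ) ^ Y.card := by
      unfold qBinomial
      rw [if_pos hmn, hB]
    rw [hq]
    rw [finsum_mem_eq_finite_toFinset_sum _ hAfin, finsum_mem_eq_finite_toFinset_sum _ hBfin]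
    rw [Finset.mul_sum]
    symm
    refine Finset.sum_bij (fun μ _ => unshift m μ) ?_ ?_ ?_ ?_
    · -- maps into A
      intro μ hμ
      rw [Set.Finite.mem_toFinset] at hμ ⊢
      obtain ⟨hc, hr⟩ := hμ
      refine ⟨?_, colLen0_unshift m μ, ?_⟩
      · intro i hpos
        simp only [rowLen_unshift] at hpos ⊢
        have := μ.rowLen_anti i (i + 1) (by omega)
        split_ifs at hpos ⊢ <;> omega
      · rw [rowLen_unshift]
        split_ifs with h <;> omega
    · -- injective
      intro μ1 hμ1 μ2 hμ2 heq
      rw [Set.Finite.mem_toFinset] at hμ1 hμ2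
      apply eq_of_rowLen_eq
      intro i
      by_cases him : i < m
      · have := congrArg (fun Y : YoungDiagram => Y.rowLen i) heq
        simp only [rowLen_unshift, if_pos him] at this
        omega
      · have h1 : μ1.rowLen i = 0 := by
          have := rowLen_pos_iff (Y := μ1) (i := i)
          have := hμ1.1; omega
        have h2 : μ2.rowLen i = 0 := by
          have := rowLen_pos_iff (Y := μ2) (i := i)
          have := hμ2.1; omega
        omega
    · -- surjective
      intro Y hY
      rw [Set.Finite.mem_toFinset] at hY
      obtain ⟨hd, hc, hr⟩ := hY
      refine ⟨shift m Y hd, ?_, ?_⟩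
      · rw [Set.Finite.mem_toFinset]
        constructor
        · have hnm : ¬ (m, 0) ∈ shift m Y hd := by rw [mem_shift]; omega
          rw [mem_iff_lt_colLen] at hnm
          omega
        · rw [rowLen_shift]
          split_ifs with h <;> omega
      · apply eq_of_rowLen_eq
        intro i
        rw [rowLen_unshift, rowLen_shift]
        split_ifs with h
        · have := hlow Y ⟨hd, hc, hr⟩ i h
          omega
        · have h1 : Y.rowLen i = 0 := by
            have := rowLen_pos_iff (Y := Y) (i := i)
            omega
          omega
    · -- values
      intro μ hμ
      rw [Set.Finite.mem_toFinset] at hμ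
      have hcard : (unshift m μ).card = μ.card + m * (m + 1) / 2 := by
        rw [card_eq_sum_rowLens (unshift m μ) m (le_of_eq (colLen0_unshift m μ)),
          card_eq_sum_rowLens μ m hμ.1]
        rw [← staircase_sum m, ← Finset.sum_add_distrib]
        refine Finset.sum_congr rfl fun i hi => ?_
        rw [rowLen_unshift, if_pos (Finset.mem_range.mp hi)]
      rw [hcard, pow_add, mul_comm]
  · -- degenerate case m > n
    have hAempty : A = ∅ := by
      ext Y
      simp only [Set.mem_empty_iff_false, iff_false]
      rintro ⟨hd, hc, hr⟩
      have hm0 : 0 < m := by omega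
      have := hlow Y ⟨hd, hc, hr⟩ 0 hm0
      omega
    rw [hAempty, finsum_mem_empty]
    unfold qBinomial
    rw [if_neg hmn, mul_zero]
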